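/- arXiv:1507.05938 — 5 statements merged into one kernel-verified Lean document; each statement's English description precedes it below -/
import Mathlib

section
/- Let A be an m×m real matrix with nonnegative off-diagonal entries. If v : [0,∞) → ℝ^m is differentiable and satisfies the componentwise differential inequality v'(t) ≤ A v(t) for all t ≥ 0, and r solves r'(t) = A r(t) with r(0) = v(0), then v(t) ≤ r(t) componentwise for all t ≥ 0. -/
/-!
The difference `w = r - v` satisfies `w' ≥ A w` and `w 0 = 0`. Adding `ε e^{K (s - t)}` to every
component, with `K` larger than every row sum of `A`, makes this inequality strict. For a strict
supersolution `u` with `u 0 > 0`, look at the first time some component `u_i` vanishes: there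
`u_i' ≤ 0`, while `u ≥ 0` and `u_i = 0` give `(A u)_i ≥ 0` because the off-diagonal entries of `A`
are nonnegative, contradicting `u_i' > (A u)_i`. Letting `ε → 0` gives `w ≥ 0`.
-/

open Set Matrix

theorem HasDerivAt.nonpos_of_forall_Ico_le {f : ℝ → ℝ} {d a t : ℝ} (hat : a < t)
    (hf : HasDerivAt f d t) (hmin : ∀ s ∈ Ico a t, f t ≤ f s) : d ≤ 0 := by
  have hloc : IsLocalMinOn f (Icc a t) t := by
    refine IsMinOn.localize fun s (hs : s ∈ Icc a t) => show f t ≤ f s from ?_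
    rcases hs.2.lt_or_eq with hst | rfl
    · exact hmin s ⟨hs.1, hst⟩
    · rfl
  have hcone : a - t ∈ posTangentConeAt (Icc a t) t :=
    sub_mem_posTangentConeAt_of_segment_subset
      ((convex_Icc a t).segment_subset (right_mem_Icc.2 hat.le) (left_mem_Icc.2 hat.le))
  have h := hloc.hasFDerivWithinAt_nonneg hf.hasFDerivAt.hasFDerivWithinAt hcone
  simp only [ContinuousLinearMap.toSpanSingleton_apply, smul_eq_mul] at h
  nlinarith

theorem Matrix.mulVec_apply_nonneg_of_offDiag_nonneg {ι R : Type*} [Fintype ι] [Semiring R]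
    [PartialOrder R] [IsOrderedRing R] {A : Matrix ι ι R} (hA : ∀ i j, i ≠ j → 0 ≤ A i j)
    {x : ι → R} (hx : 0 ≤ x) {i : ι} (hi : x i = 0) : 0 ≤ (A *ᵥ x) i :=
  Finset.sum_nonneg fun j _ => by
    rcases eq_or_ne i j with rfl | hij
    · simp [hi]
    · exact mul_nonneg (hA i j hij) (hx j)

theorem exists_first_zero_of_pos {ι : Type*} [Finite ι] {u : ℝ → ι → ℝ} {a : ℝ}
    (hu : ∀ i, ContinuousOn (fun s => u s i) (Ici a)) (ha : ∀ i, 0 < u a i)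
    (hnonpos : ∃ t, a ≤ t ∧ ∃ i, u t i ≤ 0) :
    ∃ t, a < t ∧ (∀ s ∈ Ico a t, ∀ i, 0 < u s i) ∧ 0 ≤ u t ∧ ∃ i, u t i = 0 := by
  set B := ⋃ i, Ici a ∩ (fun s => u s i) ⁻¹' Iic 0
  have hB : IsClosed B := isClosed_iUnion_of_finite fun i =>
    (hu i).preimage_isClosed_of_isClosed isClosed_Ici isClosed_Iic
  have hBne : B.Nonempty := by
    obtain ⟨t, hat, i, hi⟩ := hnonpos
    exact ⟨t, mem_iUnion.2 ⟨i, hat, hi⟩⟩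
  have hBbdd : BddBelow B := ⟨a, fun s hs => by
    obtain ⟨i, hs, -⟩ := mem_iUnion.1 hs
    exact hs⟩
  obtain ⟨i, hat, hi⟩ := mem_iUnion.1 (hB.csInf_mem hBne hBbdd)
  set t := sInf B
  have hbefore : ∀ s ∈ Ico a t, ∀ j, 0 < u s j := fun s hs j => by
    by_contra! hj
    exact hs.2.not_ge (csInf_le hBbdd (mem_iUnion.2 ⟨j, hs.1, hj⟩))
  have hat : a < t := lt_of_le_of_ne hat fun h => (ha i).not_ge (h ▸ hi)
  have hnonneg : 0 ≤ u t := fun j => by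
    refine le_on_closure (f := fun _ => 0) (g := fun s => u s j) (s := Ico a t)
      (fun s hs => (hbefore s hs j).le) continuousOn_const ?_ ?_
    · rw [closure_Ico hat.ne]
      exact (hu j).mono Icc_subset_Ici_self
    · rw [closure_Ico hat.ne]
      exact right_mem_Icc.2 hat.le
  exact ⟨t, hat, hbefore, hnonneg, i, le_antisymm hi (hnonneg i)⟩

section Comparison

variable {ι : Type*} [Fintype ι] {A : Matrix ι ι ℝ} {a : ℝ}

theorem pos_of_hasDerivAt_of_mulVec_lt (hA : ∀ i j, i ≠ j → 0 ≤ A i j) {u u' : ℝ → ι → ℝ}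
    (hu : ∀ t, a ≤ t → ∀ i, HasDerivAt (fun s => u s i) (u' t i) t)
    (hlt : ∀ t, a ≤ t → ∀ i, (A *ᵥ u t) i < u' t i) (ha : ∀ i, 0 < u a i) :
    ∀ t, a ≤ t → ∀ i, 0 < u t i := by
  by_contra! hnonpos
  obtain ⟨t, hat, hbefore, hnonneg, i, hi⟩ := exists_first_zero_of_pos
    (fun i s hs => (hu s hs i).continuousAt.continuousWithinAt) ha hnonpos
  have hderiv : u' t i ≤ 0 := (hu t hat.le i).nonpos_of_forall_Ico_le hat fun s hs => by
    simpa only [hi] using (hbefore s hs i).le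
  have hmulVec : 0 ≤ (A *ᵥ u t) i := mulVec_apply_nonneg_of_offDiag_nonneg hA hnonneg hi
  linarith [hlt t hat.le i]

theorem nonneg_of_hasDerivAt_of_mulVec_le (hA : ∀ i j, i ≠ j → 0 ≤ A i j) {w w' : ℝ → ι → ℝ}
    (hw : ∀ t, a ≤ t → ∀ i, HasDerivAt (fun s => w s i) (w' t i) t)
    (hle : ∀ t, a ≤ t → ∀ i, (A *ᵥ w t) i ≤ w' t i) (ha : 0 ≤ w a) :
    ∀ t, a ≤ t → ∀ i, 0 ≤ w t i := by
  obtain ⟨K, hK⟩ : ∃ K, ∀ i, ∑ j, A i j < K := by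
    obtain ⟨M, hM⟩ := Finite.exists_le fun i => ∑ j, A i j
    exact ⟨M + 1, fun i => (hM i).trans_lt (lt_add_one M)⟩
  intro t hat i
  refine le_of_forall_pos_lt_add fun ε hε => ?_
  set e : ℝ → ℝ := fun s => ε * Real.exp (K * (s - t))
  have he : ∀ s, HasDerivAt e (e s * K) s := fun s => by
    simpa [e, mul_assoc] using (((hasDerivAt_id s).sub_const t).const_mul K).exp.const_mul ε
  have hmulVec : ∀ s i, (A *ᵥ fun j => w s j + e s) i = (A *ᵥ w s) i + (∑ j, A i j) * e s := by
    intro s i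
    simp only [mulVec, dotProduct, mul_add, Finset.sum_add_distrib, Finset.sum_mul]
  have hpos := pos_of_hasDerivAt_of_mulVec_lt hA (u := fun s j => w s j + e s)
    (fun s hs j => (hw s hs j).add (he s)) (fun s hs j => ?_) (fun j => ?_) t hat i
  · simpa [e] using hpos
  · rw [hmulVec]
    linarith [hle s hs j, mul_lt_mul_of_pos_right (hK j) (by positivity : 0 < e s)]
  · exact add_pos_of_nonneg_of_pos (ha j) (by positivity)

end Comparison

/-- Linear comparison principle: if `A` is Metzler, `v` satisfies the componentwise
differential inequality `v' ≤ A v` on `[0,∞)`, and `r` solves `r' = A r` with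
`r 0 = v 0`, then `v t ≤ r t` componentwise for all `t ≥ 0`. -/
theorem stmt_2 {m : ℕ} (A : Matrix (Fin m) (Fin m) ℝ)
    (hMetzler : ∀ i j, i ≠ j → 0 ≤ A i j)
    (v v' r : ℝ → Fin m → ℝ)
    (hv : ∀ t, 0 ≤ t → ∀ i, HasDerivAt (fun s => v s i) (v' t i) t)
    (hineq : ∀ t, 0 ≤ t → ∀ i, v' t i ≤ A.mulVec (v t) i)
    (hr : ∀ t, 0 ≤ t → ∀ i, HasDerivAt (fun s => r s i) (A.mulVec (r t) i) t)
    (h0 : r 0 = v 0) :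
    ∀ t, 0 ≤ t → ∀ i, v t i ≤ r t i := by
  have hdiff := nonneg_of_hasDerivAt_of_mulVec_le hMetzler (w := r - v)
    (w' := fun t => A *ᵥ r t - v' t) (fun t ht i => (hr t ht i).sub (hv t ht i))
    (fun t ht i => by simpa [mulVec_sub] using sub_le_sub_left (hineq t ht i) _) (by simp [h0])
  intro t ht i
  simpa using hdiff t ht i
end

section
/- If A is a real m×m Metzler matrix (nonnegative off-diagonal entries) whose row sums weighted by positive constants γ_j > 0 are nonpositive, i.e., ∑_j a_ij γ_j ≤ 0 for every i, and v : [0,∞) → ℝ^m is a C¹ function with v(t) ≥ 0 componentwise for all t, componentwise v'(t) ≤ A v(t), and 0 ≤ v_i(0) ≤ γ_i for all i, then v_i(t) ≤ γ_i for all i and all t ≥ 0. -/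
open Finset Filter Set Real
open scoped Topology

/-- Invariance of the box `{v : 0 ≤ v_i ≤ γ_i}` under the comparison dynamics:
if `A` is Metzler, `∑_j a_ij γ_j ≤ 0` with `γ_j > 0`, `v` is C¹ with `v' ≤ A v`
componentwise, stays nonnegative, and `0 ≤ v_i(0) ≤ γ_i`, then `v_i(t) ≤ γ_i`
for all `t ≥ 0`. -/
theorem stmt_5 {m : ℕ} (A : Matrix (Fin m) (Fin m) ℝ)
    (hMetzler : ∀ i j, i ≠ j → 0 ≤ A i j)
    (γ : Fin m → ℝ) (hγ : ∀ i, 0 < γ i)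
    (hrow : ∀ i, ∑ j, A i j * γ j ≤ 0)
    (v v' : ℝ → Fin m → ℝ)
    (hC1 : ∀ i, ContDiff ℝ 1 (fun t => v t i))
    (hv : ∀ t, 0 ≤ t → ∀ i, HasDerivAt (fun s => v s i) (v' t i) t)
    (hineq : ∀ t, 0 ≤ t → ∀ i, v' t i ≤ A.mulVec (v t) i)
    (hnonneg : ∀ t, 0 ≤ t → ∀ i, 0 ≤ v t i)
    (h0 : ∀ i, v 0 i ≤ γ i) :
    ∀ t, 0 ≤ t → ∀ i, v t i ≤ γ i := by
  intro t ht i₀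
  haveI : Nonempty (Fin m) := ⟨i₀⟩
  have hune : (Finset.univ : Finset (Fin m)).Nonempty := univ_nonempty
  set g : ℝ → ℝ := fun s => Finset.univ.sup' hune (fun i => v s i / γ i) with hg
  have hgle : ∀ s i, v s i / γ i ≤ g s := fun s i => Finset.le_sup' (fun i => v s i / γ i) (mem_univ i)
  have hgcont : Continuous g := by
    apply Continuous.finset_sup'_apply hune
    intro i _
    exact (hC1 i).continuous.div_const _
  have hSne : ∀ s, (Finset.univ.filter (fun i => v s i / γ i = g s)).Nonempty := by
    intro s
    obtain ⟨i, _, hi⟩ := Finset.exists_mem_eq_sup' hune (fun i => v s i / γ i)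
    exact ⟨i, Finset.mem_filter.2 ⟨mem_univ i, hi.symm⟩⟩
  set f' : ℝ → ℝ := fun s =>
    (Finset.univ.filter (fun i => v s i / γ i = g s)).sup' (hSne s) (fun i => v' s i / γ i)
      with hf'def
  have key : ∀ ε : ℝ, 0 < ε → g t ≤ 1 + ε * Real.exp t := by
    intro ε hε
    set B : ℝ → ℝ := fun s => 1 + ε * Real.exp s with hB
    have hBd : ∀ s : ℝ, HasDerivAt B (ε * Real.exp s) s := by
      intro s
      exact ((Real.hasDerivAt_exp s).const_mul ε).const_add 1
    have main := image_le_of_liminf_slope_right_lt_deriv_boundary' (f := g) (f' := f')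
      (a := 0) (b := t) (hgcont.continuousOn)
      (by
        intro x hx r hr
        have hx0 : (0:ℝ) ≤ x := hx.1
        have hev : ∀ᶠ z in 𝓝[>] x, slope g x z < r := by
          have hE1 : ∀ᶠ z in 𝓝[>] x,
              ∀ i ∈ Finset.univ.filter (fun i => v x i / γ i = g x),
                slope (fun s => v s i / γ i) x z < r := by
            rw [eventually_all_finset]
            intro i hi
            have hd : HasDerivAt (fun s => v s i / γ i) (v' x i / γ i) x :=
              (hv x hx0 i).div_const _
            have hts := hasDerivAt_iff_tendsto_slope.1 hd
            have hlt : v' x i / γ i < r :=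
              lt_of_le_of_lt (Finset.le_sup' (fun i => v' x i / γ i) hi) hr
            have h2 : ∀ᶠ z in 𝓝[≠] x, slope (fun s => v s i / γ i) x z < r :=
              hts (Iio_mem_nhds hlt)
            have hmono : 𝓝[>] x ≤ 𝓝[≠] x :=
              nhdsWithin_mono x fun z hz => ne_of_gt hz
            exact h2.filter_mono hmono
          have hE2 : ∀ᶠ z in 𝓝[>] x,
              ∀ j ∈ Finset.univ.filter (fun i => ¬ (v x i / γ i = g x)),
                v z j / γ j < g z := by
            rw [eventually_all_finset]
            intro j hj
            have hjlt : v x j / γ j < g x :=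
              lt_of_le_of_ne (hgle x j) (Finset.mem_filter.1 hj).2
            have hc : ContinuousAt (fun z => v z j / γ j) x :=
              ((hC1 j).continuous.div_const _).continuousAt
            have hev' : ∀ᶠ z in 𝓝 x, v z j / γ j < g z :=
              hc.eventually_lt hgcont.continuousAt hjlt
            exact nhdsWithin_le_nhds hev'
          filter_upwards [hE1, hE2, self_mem_nhdsWithin] with z h1 h2 hzx
          obtain ⟨iz, hiz⟩ := hSne z
          have hizm := Finset.mem_filter.1 hiz
          have hizx : v x iz / γ iz = g x := by
            by_contra hne
            have := h2 iz (Finset.mem_filter.2 ⟨mem_univ iz, hne⟩)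
            rw [hizm.2] at this
            exact lt_irrefl _ this
          have hslope : slope g x z = slope (fun s => v s iz / γ iz) x z := by
            simp only [slope_def_field]
            rw [hizm.2, hizx]
          have hlt := h1 iz (Finset.mem_filter.2 ⟨mem_univ iz, hizx⟩)
          exact hslope ▸ hlt
        exact hev.frequently)
      (by
        apply Finset.sup'_le
        intro i _
        have h1 : v 0 i / γ i ≤ 1 := (div_le_one (hγ i)).2 (h0 i)
        have h2 : (1:ℝ) ≤ B 0 := by
          simp only [hB, Real.exp_zero, mul_one]
          linarith
        exact le_trans h1 h2)
      (by fun_prop)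
      (fun x _ => (hBd x).hasDerivWithinAt)
      (by
        intro x hx hgB
        have hx0 : (0:ℝ) ≤ x := hx.1
        have hBpos : 0 < B x := by
          simp only [hB]
          positivity
        rw [hf'def]
        rw [Finset.sup'_lt_iff]
        intro i hi
        have hix : v x i / γ i = g x := (Finset.mem_filter.1 hi).2
        have hvix : v x i = B x * γ i := by
          have h9 : v x i / γ i = B x := hix.trans hgB
          rw [div_eq_iff (hγ i).ne'] at h9
          exact h9
        have hAv : A.mulVec (v x) i ≤ 0 := by
          have h1 : A.mulVec (v x) i ≤ ∑ j, A i j * (B x * γ j) := by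
            rw [Matrix.mulVec, dotProduct]
            apply Finset.sum_le_sum
            intro j _
            by_cases hji : j = i
            · subst hji; rw [hvix]
            · apply mul_le_mul_of_nonneg_left ?_ (hMetzler i j (Ne.symm hji))
              have h3 : v x j / γ j ≤ B x := (hgle x j).trans_eq hgB
              exact (div_le_iff₀ (hγ j)).1 h3
          have h2 : ∑ j, A i j * (B x * γ j) = B x * ∑ j, A i j * γ j := by
            rw [Finset.mul_sum]
            congr 1
            ext j
            ring
          have h4 : B x * ∑ j, A i j * γ j ≤ 0 := by
            have := mul_le_mul_of_nonneg_left (hrow i) hBpos.le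
            simpa using this
          rw [h2] at h1
          linarith
        have h5 : v' x i ≤ 0 := le_trans (hineq x hx0 i) hAv
        have h6 : v' x i / γ i ≤ 0 := div_nonpos_of_nonpos_of_nonneg h5 (hγ i).le
        have h7 : 0 < ε * Real.exp x := by positivity
        linarith)
    have := main (x := t) ⟨ht, le_refl t⟩
    simpa [hB] using this
  have hgt1 : g t ≤ 1 := by
    have hexp : 0 < Real.exp t := Real.exp_pos t
    refine le_of_forall_pos_le_add ?_
    intro δ hδ
    have h8 := key (δ / Real.exp t) (by positivity)
    calc g t ≤ 1 + δ / Real.exp t * Real.exp t := h8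
      _ = 1 + δ := by field_simp
  have := (hgle t i₀).trans hgt1
  exact (div_le_one (hγ i₀)).1 this
end

section
/- Let V : ℝ^n → ℝ be continuously differentiable, positive definite, with ∇V(x)·f(x) negative definite on an open neighborhood D of the origin (i.e., ∇V(x)·f(x) < 0 for x ∈ D \ {0}). Then the origin is an asymptotically stable equilibrium of x' = f(x): every solution starting sufficiently close to 0 stays close to 0 and converges to 0 as t → ∞. -/
/-- Lyapunov's direct method for asymptotic stability: if `V` is C¹, positive
definite, and `∇V·f` is negative definite on an open neighborhood `D` of the
origin, then the origin is asymptotically stable for `x' = f x`. -/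
theorem stmt_8 {n : ℕ} (f : (Fin n → ℝ) → (Fin n → ℝ)) (hf : f 0 = 0)
    (hlip : LocallyLipschitz f)
    (V : (Fin n → ℝ) → ℝ) (hV : ContDiff ℝ 1 V)
    (D : Set (Fin n → ℝ)) (hDopen : IsOpen D) (hD0 : (0 : Fin n → ℝ) ∈ D)
    (hV0 : V 0 = 0) (hVpos : ∀ y ∈ D, y ≠ 0 → 0 < V y)
    (hneg : ∀ y ∈ D, y ≠ 0 → fderiv ℝ V y (f y) < 0) :
    ∀ ε > 0, ∃ δ > 0, ∀ x : ℝ → Fin n → ℝ,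
      (∀ t, 0 ≤ t → HasDerivAt x (f (x t)) t) → ‖x 0‖ < δ →
      (∀ t, 0 ≤ t → ‖x t‖ < ε) ∧
      Filter.Tendsto x Filter.atTop (nhds 0) := by
  intro ε hε
  -- basic facts about V
  have hVdiff : ∀ y, HasFDerivAt V (fderiv ℝ V y) y := fun y =>
    (hV.differentiable one_ne_zero y).hasFDerivAt
  have hVnonneg : ∀ y ∈ D, 0 ≤ V y := by
    intro y hy
    rcases eq_or_ne y 0 with h | h
    · simp [h, hV0]
    · exact (hVpos y hy h).le
  have hmin0 : IsLocalMin V 0 := by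
    filter_upwards [hDopen.mem_nhds hD0] with y hy
    simpa [hV0] using hVnonneg y hy
  have hfd0 : fderiv ℝ V 0 = 0 := hmin0.fderiv_eq_zero
  have hle : ∀ y ∈ D, fderiv ℝ V y (f y) ≤ 0 := by
    intro y hy
    rcases eq_or_ne y 0 with h | h
    · simp [h, hfd0]
    · exact (hneg y hy h).le
  -- key monotonicity lemma along trajectories
  have key : ∀ (x : ℝ → Fin n → ℝ), (∀ t, 0 ≤ t → HasDerivAt x (f (x t)) t) →
      ∀ (k : ℝ) (s : Set ℝ), Convex ℝ s → s ⊆ Set.Ici 0 →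
      (∀ t ∈ interior s, fderiv ℝ V (x t) (f (x t)) ≤ k) →
      AntitoneOn (fun t => V (x t) - k * t) s := by
    intro x hx k s hconv hs hk
    have hder : ∀ t, 0 ≤ t →
        HasDerivAt (fun t => V (x t) - k * t) (fderiv ℝ V (x t) (f (x t)) - k) t := by
      intro t ht
      have h1 : HasDerivAt (fun t => V (x t)) (fderiv ℝ V (x t) (f (x t))) t :=
        (hVdiff (x t)).comp_hasDerivAt t (hx t ht)
      have h2 := h1.sub ((hasDerivAt_id t).const_mul k); rw [mul_one] at h2; exact h2
    apply antitoneOn_of_deriv_nonpos hconv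
    · exact fun t ht => (hder t (hs ht)).continuousAt.continuousWithinAt
    · exact fun t ht => (hder t (hs (interior_subset ht))).differentiableAt.differentiableWithinAt
    · intro t ht
      rw [(hder t (hs (interior_subset ht))).deriv]
      exact sub_nonpos.mpr (hk t ht)
  rcases subsingleton_or_nontrivial (Fin n → ℝ) with hsub | hnt
  · -- trivial case: the space is a point
    refine ⟨1, one_pos, fun x hx hx0 => ?_⟩
    have hx0' : ∀ t, x t = 0 := fun t => Subsingleton.elim _ _
    constructor
    · intro t ht
      rw [hx0' t]
      simpa using hε
    · have : x = fun _ => (0 : Fin n → ℝ) := funext fun t => hx0' t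
      rw [this]
      exact tendsto_const_nhds
  -- choose r with closedBall 0 r ⊆ D and r < ε
  obtain ⟨r', hr', hball⟩ := Metric.isOpen_iff.mp hDopen 0 hD0
  set r : ℝ := min (r' / 2) (ε / 2) with hr_def
  have hrpos : 0 < r := lt_min (by linarith) (by linarith)
  have hrD : Metric.closedBall (0 : Fin n → ℝ) r ⊆ D := by
    refine (Metric.closedBall_subset_ball ?_).trans hball
    exact lt_of_le_of_lt (min_le_left _ _) (by linarith)
  have hrε : r < ε := lt_of_le_of_lt (min_le_right _ _) (by linarith)
  -- m : minimum of V on the sphere of radius r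
  obtain ⟨y₀, hy₀s, hy₀min⟩ := (isCompact_sphere (0 : Fin n → ℝ) r).exists_isMinOn
    (NormedSpace.sphere_nonempty.mpr hrpos.le) hV.continuous.continuousOn
  set m : ℝ := V y₀ with hm_def
  have hy₀D : y₀ ∈ D := hrD (Metric.sphere_subset_closedBall hy₀s)
  have hy₀ne : y₀ ≠ 0 := by
    intro h
    rw [h] at hy₀s
    simp [Metric.mem_sphere, hrpos.ne'] at hy₀s
    exact hrpos.ne hy₀s
  have hm : 0 < m := hVpos y₀ hy₀D hy₀ne
  -- choose δ via continuity of V at 0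
  obtain ⟨δ₀, hδ₀, hδ₀m⟩ := Metric.continuousAt_iff.mp (hV.continuous.continuousAt (x := (0 : Fin n → ℝ))) m hm
  have hδV : ∀ y : Fin n → ℝ, ‖y‖ < δ₀ → V y < m := by
    intro y hy
    have := hδ₀m (by simpa [dist_zero_right] using hy)
    rw [hV0, dist_zero_right] at this
    calc V y ≤ |V y| := le_abs_self _
    _ < m := by simpa using this
  refine ⟨min δ₀ r, lt_min hδ₀ hrpos, fun x hx hx0 => ?_⟩
  have hx0r : ‖x 0‖ < r := lt_of_lt_of_le hx0 (min_le_right _ _)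
  have hx0m : V (x 0) < m := hδV _ (lt_of_lt_of_le hx0 (min_le_left _ _))
  -- stability: the trajectory stays in the open ball of radius r
  have hstay : ∀ t, 0 ≤ t → ‖x t‖ < r := by
    by_contra h
    push_neg at h
    obtain ⟨t₁, ht₁, ht₁r⟩ := h
    set S : Set ℝ := {t | 0 ≤ t ∧ r ≤ ‖x t‖} with hS_def
    have hSne : S.Nonempty := ⟨t₁, ht₁, ht₁r⟩
    have hSclosed : IsClosed S := by
      have hSeq : S = Set.Ici 0 ∩ (fun t => ‖x t‖) ⁻¹' Set.Ici r := by
        ext t; simp [hS_def, Set.mem_setOf_eq]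
      rw [hSeq]
      refine ContinuousOn.preimage_isClosed_of_isClosed ?_ isClosed_Ici isClosed_Ici
      exact fun t ht => ((hx t ht).continuousAt.norm).continuousWithinAt
    have hSbdd : BddBelow S := ⟨0, fun t ht => ht.1⟩
    set t₀ : ℝ := sInf S with ht₀_def
    have ht₀S : t₀ ∈ S := hSclosed.csInf_mem hSne hSbdd
    have ht₀pos : 0 < t₀ := by
      rcases lt_or_eq_of_le ht₀S.1 with h | h
      · exact h
      · exact absurd ht₀S.2 (by rw [← h]; exact not_le.mpr hx0r)
    have hlt : ∀ s, 0 ≤ s → s < t₀ → ‖x s‖ < r := by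
      intro s hs hst
      by_contra hc
      exact absurd (csInf_le hSbdd ⟨hs, not_lt.mp hc⟩) (not_le.mpr hst)
    have ht₀r : ‖x t₀‖ ≤ r := by
      have hcont : Filter.Tendsto (fun s => ‖x s‖) (nhdsWithin t₀ (Set.Iio t₀)) (nhds ‖x t₀‖) :=
        ((hx t₀ ht₀S.1).continuousAt.norm).mono_left nhdsWithin_le_nhds
      refine le_of_tendsto hcont ?_
      have h2 : ∀ᶠ s in nhds t₀, (0 : ℝ) < s := eventually_gt_nhds ht₀pos
      filter_upwards [eventually_nhdsWithin_of_eventually_nhds h2, self_mem_nhdsWithin]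
        with s hs0 hs'
      exact (hlt s hs0.le hs').le
    have hxIcc : ∀ s ∈ Set.Icc (0 : ℝ) t₀, ‖x s‖ ≤ r := by
      intro s hs
      rcases lt_or_eq_of_le hs.2 with h | h
      · exact (hlt s hs.1 h).le
      · rw [h]; exact ht₀r
    have hanti := key x hx 0 (Set.Icc 0 t₀) (convex_Icc _ _) Set.Icc_subset_Ici_self ?_
    · have hmono := hanti (Set.left_mem_Icc.mpr ht₀pos.le)
        (Set.right_mem_Icc.mpr ht₀pos.le) ht₀pos.le
      simp only [zero_mul, sub_zero] at hmono
      have hsphere : x t₀ ∈ Metric.sphere (0 : Fin n → ℝ) r := by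
        simp [Metric.mem_sphere, dist_zero_right]
        exact le_antisymm ht₀r ht₀S.2
      have : m ≤ V (x t₀) := hy₀min hsphere
      linarith
    · intro s hs
      rw [interior_Icc] at hs
      have hmem : ‖x s‖ ≤ r := hxIcc s ⟨hs.1.le, hs.2.le⟩
      exact hle _ (hrD (mem_closedBall_zero_iff.mpr hmem))
  have hxD : ∀ t, 0 ≤ t → x t ∈ D := fun t ht =>
    hrD (by simpa [Metric.mem_closedBall, dist_zero_right] using (hstay t ht).le)
  -- V along the trajectory is antitone on [0, ∞)
  have hanti : AntitoneOn (fun t => V (x t)) (Set.Ici 0) := by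
    have := key x hx 0 (Set.Ici 0) (convex_Ici _) le_rfl ?_
    · simpa using this
    · intro t ht
      rw [interior_Ici] at ht
      exact hle _ (hxD t (le_of_lt ht))
  -- the limit L of V (x t)
  set g : ℝ → ℝ := fun t => V (x (max t 0)) with hg_def
  have hg_anti : Antitone g := by
    intro a b hab
    exact hanti (Set.mem_Ici.mpr (le_max_right a 0)) (Set.mem_Ici.mpr (le_max_right b 0))
      (max_le_max hab le_rfl)
  have hg_nonneg : ∀ t, 0 ≤ g t := fun t => hVnonneg _ (hxD _ (le_max_right t 0))
  have hg_bdd : BddBelow (Set.range g) := ⟨0, by rintro _ ⟨t, rfl⟩; exact hg_nonneg t⟩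
  set L : ℝ := ⨅ t, g t with hL_def
  have hgL : Filter.Tendsto g Filter.atTop (nhds L) := tendsto_atTop_ciInf hg_anti hg_bdd
  have hL0 : 0 ≤ L := le_ciInf hg_nonneg
  have hgeq : g =ᶠ[Filter.atTop] fun t => V (x t) := by
    filter_upwards [Filter.eventually_ge_atTop (0 : ℝ)] with t ht
    simp [hg_def, max_eq_left ht]
  have hVxL : Filter.Tendsto (fun t => V (x t)) Filter.atTop (nhds L) := hgL.congr' hgeq
  have hLle : ∀ t, 0 ≤ t → L ≤ V (x t) := by
    intro t ht
    calc L ≤ g t := ciInf_le hg_bdd t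
    _ = V (x t) := by simp [hg_def, max_eq_left ht]
  -- L = 0
  have hL : L = 0 := by
    by_contra hLne
    have hL' : 0 < L := lt_of_le_of_ne hL0 (Ne.symm hLne)
    obtain ⟨δ₁, hδ₁, hδ₁L⟩ := Metric.continuousAt_iff.mp (hV.continuous.continuousAt (x := (0 : Fin n → ℝ))) L hL'
    have hδL : ∀ y : Fin n → ℝ, ‖y‖ < δ₁ → V y < L := by
      intro y hy
      have := hδ₁L (by simpa [dist_zero_right] using hy)
      rw [hV0, dist_zero_right] at this
      calc V y ≤ |V y| := le_abs_self _
      _ < L := by simpa using this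
    set δ₂ : ℝ := min δ₁ r with hδ₂_def
    have hδ₂pos : 0 < δ₂ := lt_min hδ₁ hrpos
    have hfar : ∀ t, 0 ≤ t → δ₂ ≤ ‖x t‖ := by
      intro t ht
      by_contra hc
      exact absurd (hLle t ht)
        (not_le.mpr (hδL _ (lt_of_lt_of_le (not_le.mp hc) (min_le_left _ _))))
    set K : Set (Fin n → ℝ) := Metric.closedBall 0 r \ Metric.ball 0 δ₂ with hK_def
    have hKcompact : IsCompact K := (isCompact_closedBall _ _).diff Metric.isOpen_ball
    have hKne : K.Nonempty := by
      refine ⟨x 0, ?_, ?_⟩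
      · simpa [Metric.mem_closedBall, dist_zero_right] using hx0r.le
      · simpa [Metric.mem_ball, dist_zero_right] using not_lt.mpr (hfar 0 le_rfl)
    have hWcont : Continuous fun y => fderiv ℝ V y (f y) :=
      (hV.continuous_fderiv one_ne_zero).clm_apply hlip.continuous
    obtain ⟨y₁, hy₁K, hy₁max⟩ := hKcompact.exists_isMaxOn hKne hWcont.continuousOn
    set k : ℝ := fderiv ℝ V y₁ (f y₁) with hk_def
    have hy₁D : y₁ ∈ D := hrD hy₁K.1
    have hy₁ne : y₁ ≠ 0 := by
      intro h
      have := hy₁K.2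
      rw [h] at this
      exact this (Metric.mem_ball_self hδ₂pos)
    have hkneg : k < 0 := hneg y₁ hy₁D hy₁ne
    have hxK : ∀ t, 0 ≤ t → x t ∈ K := by
      intro t ht
      refine ⟨by simpa [Metric.mem_closedBall, dist_zero_right] using (hstay t ht).le, ?_⟩
      simpa [Metric.mem_ball, dist_zero_right] using not_lt.mpr (hfar t ht)
    have hanti2 : AntitoneOn (fun t => V (x t) - k * t) (Set.Ici 0) := by
      refine key x hx k (Set.Ici 0) (convex_Ici _) le_rfl ?_
      intro t ht
      rw [interior_Ici] at ht
      exact hy₁max (hxK t (le_of_lt ht))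
    set T : ℝ := (V (x 0) + 1) / (-k) with hT_def
    have hVx0 : 0 ≤ V (x 0) := hVnonneg _ (hxD 0 le_rfl)
    have hTpos : 0 < T := div_pos (by linarith) (by linarith)
    have hmono2 := hanti2 (Set.mem_Ici.mpr le_rfl) (Set.mem_Ici.mpr hTpos.le) hTpos.le
    have hkT : k * T = -(V (x 0) + 1) := by
      have h1 : T * -k = V (x 0) + 1 := (eq_div_iff (by linarith : -k ≠ 0)).mp hT_def
      linear_combination -h1
    have : L ≤ V (x T) := hLle T hTpos.le
    simp only [mul_zero, sub_zero] at hmono2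
    -- hmono2 : V (x T) - k * T ≤ V (x 0) - k * 0
    rw [hkT] at hmono2
    linarith
  -- conclusion
  rw [hL] at hVxL
  refine ⟨fun t ht => lt_trans (hstay t ht) hrε, ?_⟩
  rw [Metric.tendsto_atTop]
  intro ε' hε'
  rcases le_or_gt ε' r with hcase | hcase
  · set K' : Set (Fin n → ℝ) := Metric.closedBall 0 r \ Metric.ball 0 ε' with hK'_def
    rcases K'.eq_empty_or_nonempty with hK'e | hK'ne
    · refine ⟨0, fun t ht => ?_⟩
      rw [dist_zero_right]
      by_contra hc
      have : x t ∈ K' := ⟨by simpa [Metric.mem_closedBall, dist_zero_right] using (hstay t ht).le,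
        by simpa [Metric.mem_ball, dist_zero_right] using hc⟩
      rw [hK'e] at this
      exact this
    · have hK'compact : IsCompact K' := (isCompact_closedBall _ _).diff Metric.isOpen_ball
      obtain ⟨y₂, hy₂K, hy₂min⟩ := hK'compact.exists_isMinOn hK'ne hV.continuous.continuousOn
      have hy₂D : y₂ ∈ D := hrD hy₂K.1
      have hy₂ne : y₂ ≠ 0 := by
        intro h
        have := hy₂K.2
        rw [h] at this
        exact this (Metric.mem_ball_self hε')
      have hm' : 0 < V y₂ := hVpos y₂ hy₂D hy₂ne
      have hev : ∀ᶠ t in Filter.atTop, V (x t) < V y₂ ∧ (0 : ℝ) ≤ t :=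
        (hVxL.eventually_lt_const hm').and (Filter.eventually_ge_atTop 0)
      obtain ⟨N, hN⟩ := Filter.eventually_atTop.mp hev
      refine ⟨N, fun t ht => ?_⟩
      obtain ⟨hVt, ht0⟩ := hN t ht
      rw [dist_zero_right]
      by_contra hc
      have hmem : x t ∈ K' := ⟨by simpa [Metric.mem_closedBall, dist_zero_right] using
        (hstay t ht0).le, by simpa [Metric.mem_ball, dist_zero_right] using hc⟩
      exact absurd (hy₂min hmem) (not_le.mpr hVt)
  · refine ⟨0, fun t ht => ?_⟩
    rw [dist_zero_right]
    exact lt_trans (hstay t ht) hcase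
end

section
/- Suppose V₁,…,V_m : ℝ^{n} → ℝ are continuously differentiable, each positive definite in its subsystem states, and along trajectories of x' = f(x) one has d/dt V_i(x(t)) ≤ ∑_j a_ij V_j(x(t)) for all t where A = [a_ij] is Metzler and Hurwitz. If additionally each V_i satisfies α_i ‖x_i‖² ≤ V_i(x) ≤ β_i ‖x_i‖² with α_i, β_i > 0, then the trajectory x(t) converges to 0 exponentially: ‖x(t)‖ ≤ c e^{-bt} ‖x(0)‖ for some c, b > 0. -/
open scoped ENNReal NNReal
attribute [local instance] Matrix.linftyOpNormedRing Matrix.linftyOpNormedAlgebra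

/-- entrywise nonneg is preserved by powers -/
lemma pow_entry_nonneg {m : ℕ} {B : Matrix (Fin m) (Fin m) ℝ}
    (hB : ∀ i j, 0 ≤ B i j) (k : ℕ) : ∀ i j, 0 ≤ (B ^ k) i j := by
  induction k with
  | zero => intro i j; by_cases h : i = j <;> simp [pow_zero, Matrix.one_apply, h]
  | succ k ih =>
    intro i j
    rw [pow_succ, Matrix.mul_apply]
    exact Finset.sum_nonneg fun l _ => mul_nonneg (ih i l) (hB l j)

lemma perron_vector {m : ℕ} (hm : 0 < m) (A : Matrix (Fin m) (Fin m) ℝ)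
    (hMetzler : ∀ i j, i ≠ j → 0 ≤ A i j)
    (hHurwitz : ∀ lam : ℂ, lam ∈ spectrum ℂ (A.map (Complex.ofReal ·)) → lam.re < 0) :
    ∃ q : Fin m → ℝ, (∀ i, 0 < q i) ∧ ∀ j, ∑ i, q i * A i j = -1 := by
  haveI : NeZero m := ⟨hm.ne'⟩
  haveI : CompleteSpace (Matrix (Fin m) (Fin m) ℂ) := FiniteDimensional.complete ℂ _
  set Ac : Matrix (Fin m) (Fin m) ℂ := A.map (Complex.ofReal ·) with hAc
  -- A is invertible over ℝ
  have hdetA : IsUnit A.det := by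
    have h0 : (0 : ℂ) ∉ spectrum ℂ Ac := fun h => by simpa using hHurwitz 0 h
    rw [spectrum.zero_mem_iff] at h0
    push_neg at h0
    rw [Matrix.isUnit_iff_isUnit_det] at h0
    have hAc' : Ac.det = (Complex.ofRealHom : ℝ →+* ℂ) A.det :=
      ((Complex.ofRealHom : ℝ →+* ℂ).map_det A).symm
    rw [hAc', isUnit_iff_ne_zero] at h0
    simp only [ne_eq, map_eq_zero] at h0
    exact isUnit_iff_ne_zero.mpr h0
  have hdetnA : IsUnit (-A).det := by
    rw [Matrix.det_neg]
    exact (IsUnit.of_mul_eq_one ((-1 : ℝ) ^ Fintype.card (Fin m))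
      (by rw [← mul_pow]; simp)).mul hdetA
  -- spectrum bounds
  obtain ⟨lam0, hlam0mem, hlam0max'⟩ :=
    (spectrum.isCompact (𝕜 := ℂ) Ac).exists_isMaxOn (spectrum.nonempty Ac)
      (Complex.continuous_re.continuousOn)
  have hlam0max : ∀ lam ∈ spectrum ℂ Ac, lam.re ≤ lam0.re := hlam0max'
  set δ : ℝ := -lam0.re with hδ
  have hδpos : 0 < δ := by simpa [hδ] using hHurwitz lam0 hlam0mem
  set R : ℝ := ‖Ac‖ with hR
  have hRmem : ∀ lam ∈ spectrum ℂ Ac, ‖lam‖ ≤ R := fun lam h =>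
    spectrum.norm_le_norm_of_mem h
  -- choose the shift s
  set s : ℝ := max (R ^ 2 / (2 * δ)) (∑ i, |A i i|) + 1 with hs
  have hspos : 0 < s := by
    have h1 : (0:ℝ) ≤ R ^ 2 / (2 * δ) := by positivity
    have := le_max_left (R ^ 2 / (2 * δ)) (∑ i, |A i i|)
    simp only [hs]; linarith
  have hsR : R ^ 2 / (2 * δ) < s := by
    have := le_max_left (R ^ 2 / (2 * δ)) (∑ i, |A i i|)
    simp only [hs]; linarith
  have hsD : ∀ i : Fin m, |A i i| ≤ s := by
    intro i
    have h1 : |A i i| ≤ ∑ k, |A k k| :=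
      Finset.single_le_sum (fun k _ => abs_nonneg (A k k)) (Finset.mem_univ i)
    have := le_max_right (R ^ 2 / (2 * δ)) (∑ i, |A i i|)
    simp only [hs]; linarith
  -- the shifted matrix
  set B : Matrix (Fin m) (Fin m) ℝ := A + s • (1 : Matrix (Fin m) (Fin m) ℝ) with hB
  have hBnn : ∀ i j, 0 ≤ B i j := by
    intro i j
    by_cases h : i = j
    · subst h
      simp only [hB, Matrix.add_apply, Matrix.smul_apply, Matrix.one_apply_eq, smul_eq_mul,
        mul_one]
      have h2 : -|A i i| ≤ A i i := neg_abs_le _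
      linarith [hsD i]
    · simpa [hB, Matrix.one_apply_ne h] using hMetzler i j h
  set Bc : Matrix (Fin m) (Fin m) ℂ := B.map (Complex.ofReal ·) with hBc
  have hBcEq : Bc = (algebraMap ℂ (Matrix (Fin m) (Fin m) ℂ)) (s : ℂ) + Ac := by
    rw [Algebra.algebraMap_eq_smul_one]
    ext i j
    by_cases h : i = j <;>
      simp [hBc, hB, hAc, Matrix.one_apply, h, add_comm]
  have hspec : ∀ mu ∈ spectrum ℂ Bc, ‖mu‖₊ < s.toNNReal := by
    intro mu hmu
    rw [hBcEq, ← spectrum.singleton_add_eq] at hmu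
    obtain ⟨a, ha, lam, hlam, rfl⟩ := Set.mem_add.mp hmu
    obtain rfl : a = (s : ℂ) := Set.mem_singleton_iff.mp ha
    have hre : lam.re ≤ -δ := by
      have := hlam0max lam hlam; simp only [hδ]; linarith
    have hnorm2 : lam.re ^ 2 + lam.im ^ 2 ≤ R ^ 2 := by
      have h1 : ‖lam‖ ≤ R := hRmem lam hlam
      have h2 : ‖lam‖ ^ 2 = lam.re ^ 2 + lam.im ^ 2 := by
        rw [Complex.sq_norm, Complex.normSq_apply]; ring
      nlinarith [norm_nonneg lam]
    have h2sδ : R ^ 2 < 2 * s * δ := by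
      have := (div_lt_iff₀ (by linarith : (0:ℝ) < 2 * δ)).mp hsR
      linarith
    have hlt : ‖(s : ℂ) + lam‖ < s := by
      have hsq : ‖(s : ℂ) + lam‖ ^ 2 = (s + lam.re) ^ 2 + lam.im ^ 2 := by
        rw [Complex.sq_norm, Complex.normSq_apply]
        simp [Complex.add_re, Complex.add_im]; ring
      have : ‖(s : ℂ) + lam‖ ^ 2 < s ^ 2 := by rw [hsq]; nlinarith
      exact lt_of_pow_lt_pow_left₀ 2 hspos.le this
    rw [← norm_toNNReal, Real.toNNReal_lt_toNNReal_iff hspos]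
    exact hlt
  -- spectral radius of Bc is < s
  have hρ : spectralRadius ℂ Bc < (s.toNNReal : ℝ≥0∞) :=
    spectrum.spectralRadius_lt_of_forall_lt Bc hspec
  set z : ℂ := ((s⁻¹ : ℝ) : ℂ) with hzdef
  have hsne : (s : ℂ) ≠ 0 := by exact_mod_cast hspos.ne'
  have hzne : z ≠ 0 := by
    simp only [hzdef, ne_eq, Complex.ofReal_eq_zero, inv_eq_zero]
    exact hspos.ne'
  have hznorm : (‖z‖₊ : ℝ≥0∞) = (s.toNNReal : ℝ≥0∞)⁻¹ := by
    have h1 : ‖z‖₊ = s.toNNReal⁻¹ := by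
      rw [hzdef, ← norm_toNNReal, Complex.norm_real, Real.norm_of_nonneg (by positivity)]
      exact Real.toNNReal_inv
    rw [h1, ENNReal.coe_inv (by simp [Real.toNNReal_eq_zero]; linarith)]
  have hzlt : (‖z‖₊ : ℝ≥0∞) < (spectralRadius ℂ Bc)⁻¹ := by
    rw [hznorm]
    exact ENNReal.inv_lt_inv.mpr hρ
  obtain ⟨r', hr1', hr2'⟩ := exists_between hzlt
  have hr'top : r' ≠ ⊤ := by
    intro h
    rw [h] at hr2'
    exact (not_top_lt hr2').elim
  set r : ℝ≥0 := r'.toNNReal with hrdef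
  have hrcoe : (r : ℝ≥0∞) = r' := ENNReal.coe_toNNReal hr'top
  have hr1 : (‖z‖₊ : ℝ≥0∞) < (r : ℝ≥0∞) := by rw [hrcoe]; exact hr1'
  have hr2 : (r : ℝ≥0∞) < (spectralRadius ℂ Bc)⁻¹ := by rw [hrcoe]; exact hr2'
  have hrpos : 0 < r := by
    have h0 : (0 : ℝ≥0∞) < (r : ℝ≥0∞) := lt_of_le_of_lt zero_le hr1
    exact_mod_cast h0
  -- power series representation of the resolvent at z
  have H₁ := (spectrum.differentiableOn_inverse_one_sub_smul hr2).hasFPowerSeriesOnBall hrpos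
  have H := (spectrum.hasFPowerSeriesOnBall_inverse_one_sub_smul ℂ Bc).exchange_radius H₁
  have hmem : z ∈ Metric.eball (0 : ℂ) r := by
    rw [Metric.mem_eball, edist_zero_right]
    exact hr1
  have hSum := H.hasSum hmem
  simp only [ContinuousMultilinearMap.mkPiRing_apply, Finset.prod_const, Finset.card_univ,
    Fintype.card_fin, zero_add] at hSum
  -- identify the sum with s • Nc
  set N : Matrix (Fin m) (Fin m) ℝ := (-A)⁻¹ with hN
  set Nc : Matrix (Fin m) (Fin m) ℂ := N.map (Complex.ofReal ·) with hNc
  set Mc : Matrix (Fin m) (Fin m) ℂ := (-A).map (Complex.ofReal ·) with hMc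
  have hmapmul : ∀ (P Q : Matrix (Fin m) (Fin m) ℝ),
      (P * Q).map (Complex.ofReal ·) = P.map (Complex.ofReal ·) * Q.map (Complex.ofReal ·) := by
    intro P Q
    ext i j
    simp [Matrix.mul_apply, Matrix.map_apply]
  have hmapone : ((1 : Matrix (Fin m) (Fin m) ℝ)).map (Complex.ofReal ·)
      = (1 : Matrix (Fin m) (Fin m) ℂ) := by
    ext i j
    by_cases h : i = j <;> simp [Matrix.one_apply, h]
  have hMNc : Mc * Nc = 1 := by
    rw [hMc, hNc, ← hmapmul, Matrix.mul_nonsing_inv _ hdetnA, hmapone]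
  have hNMc : Nc * Mc = 1 := by
    rw [hMc, hNc, ← hmapmul, Matrix.nonsing_inv_mul _ hdetnA, hmapone]
  have hzs : z * (s : ℂ) = 1 := by
    show ((s⁻¹ : ℝ) : ℂ) * (s : ℂ) = 1
    rw [← Complex.ofReal_mul, inv_mul_cancel₀ hspos.ne']
    exact Complex.ofReal_one
  have hMcAc : Mc = -Ac := by
    ext i j
    show (Complex.ofReal ((-A) i j)) = -(Complex.ofReal (A i j))
    simp [Matrix.neg_apply]
  have hBcAc : Bc = Ac + (s : ℂ) • (1 : Matrix (Fin m) (Fin m) ℂ) := by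
    ext i j
    show (Complex.ofReal (B i j)) = Complex.ofReal (A i j) + (s : ℂ) * (1 : Matrix (Fin m) (Fin m) ℂ) i j
    by_cases h : i = j
    · subst h
      show Complex.ofReal ((A + s • (1 : Matrix (Fin m) (Fin m) ℝ)) i i) = _
      simp [Matrix.add_apply, Matrix.smul_apply, Matrix.one_apply_eq]
    · show Complex.ofReal ((A + s • (1 : Matrix (Fin m) (Fin m) ℝ)) i j) = _
      simp [Matrix.add_apply, Matrix.smul_apply, Matrix.one_apply_ne h]
  have hone_sub : (1 : Matrix (Fin m) (Fin m) ℂ) - z • Bc = z • Mc := by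
    rw [hBcAc, hMcAc, smul_add, smul_smul, hzs, one_smul, smul_neg]
    abel
  have hinv : Ring.inverse ((1 : Matrix (Fin m) (Fin m) ℂ) - z • Bc) = (s : ℂ) • Nc := by
    rw [hone_sub]
    have hu1 : (z • Mc) * ((s : ℂ) • Nc) = 1 := by
      rw [smul_mul_smul, hzs, hMNc, one_smul]
    have hu2 : ((s : ℂ) • Nc) * (z • Mc) = 1 := by
      rw [smul_mul_smul, mul_comm, hzs, hNMc, one_smul]
    let u : (Matrix (Fin m) (Fin m) ℂ)ˣ := ⟨z • Mc, (s : ℂ) • Nc, hu1, hu2⟩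
    exact Ring.inverse_unit u
  rw [hinv] at hSum
  -- entrywise real part, nonnegativity
  have hpow : ∀ k : ℕ, Bc ^ k = (B ^ k).map (Complex.ofReal ·) := by
    intro k
    induction k with
    | zero => rw [pow_zero, pow_zero, hmapone]
    | succ k ih => rw [pow_succ, pow_succ, ih, show Bc = B.map (Complex.ofReal ·) from rfl,
        ← hmapmul]
  have hNnn : ∀ i j, 0 ≤ N i j := by
    intro i j
    let φ : Matrix (Fin m) (Fin m) ℂ →ₗ[ℝ] ℝ :=
      { toFun := fun M => (M i j).re
        map_add' := by intros; simp [Matrix.add_apply]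
        map_smul' := by intros; simp [Matrix.smul_apply] }
    have hSum2 := hSum.mapL φ.toContinuousLinearMap
    have hterm : ∀ k : ℕ, φ.toContinuousLinearMap (z ^ k • Bc ^ k)
        = (s⁻¹) ^ k * (B ^ k) i j := by
      intro k
      have hzk : z ^ k = (((s⁻¹ : ℝ) ^ k : ℝ) : ℂ) := by
        show (((s⁻¹ : ℝ) : ℂ)) ^ k = _
        push_cast
        ring
      simp only [LinearMap.coe_toContinuousLinearMap', LinearMap.coe_mk, AddHom.coe_mk, φ,
        Matrix.smul_apply, hpow k, Matrix.map_apply, hzk, smul_eq_mul]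
      show ((((s⁻¹ ^ k : ℝ) : ℂ) • (B ^ k).map (Complex.ofReal ·)) i j).re = _
      rw [Matrix.smul_apply, Matrix.map_apply, smul_eq_mul, ← Complex.ofReal_mul]
      exact Complex.ofReal_re _
    have hval : φ.toContinuousLinearMap ((s : ℂ) • Nc) = s * N i j := by
      simp only [LinearMap.coe_toContinuousLinearMap', LinearMap.coe_mk, AddHom.coe_mk, φ,
        Matrix.smul_apply, hNc, Matrix.map_apply, smul_eq_mul]
      show (((s : ℂ) • N.map (Complex.ofReal ·)) i j).re = _
      rw [Matrix.smul_apply, Matrix.map_apply, smul_eq_mul, ← Complex.ofReal_mul]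
      exact Complex.ofReal_re _
    have h0 : 0 ≤ s * N i j := by
      rw [← hval]
      refine hasSum_le (fun k => ?_) hasSum_zero (by exact hSum2)
      rw [hterm k]
      exact mul_nonneg (by positivity) (pow_entry_nonneg hBnn k i j)
    exact nonneg_of_mul_nonneg_right h0 hspos
  -- the vector q
  have hNA : N * A = -1 := by
    have h1 : N * (-A) = 1 := Matrix.nonsing_inv_mul _ hdetnA
    have : N * A = -(N * (-A)) := by
      rw [Matrix.mul_neg, neg_neg]
    rw [this, h1]
  have hdetN : IsUnit N.det := by
    have h1 : (-A) * N = 1 := Matrix.mul_nonsing_inv _ hdetnA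
    have h2 : (-A).det * N.det = 1 := by rw [← Matrix.det_mul, h1, Matrix.det_one]
    exact IsUnit.of_mul_eq_one _ (by rw [mul_comm] at h2; exact h2)
  refine ⟨fun i => ∑ k, N k i, fun i => ?_, fun j => ?_⟩
  · rcases (Finset.sum_nonneg fun k _ => hNnn k i).lt_or_eq with h | h
    · exact h
    · exfalso
      have hcol : ∀ k, N k i = 0 := by
        intro k
        have := (Finset.sum_eq_zero_iff_of_nonneg (fun k _ => hNnn k i)).mp h.symm
        exact this k (Finset.mem_univ k)
      have : N.det = 0 := Matrix.det_eq_zero_of_column_eq_zero i hcol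
      rw [this] at hdetN
      exact not_isUnit_zero hdetN
  · have h1 : ∑ i, (∑ k, N k i) * A i j = ∑ k, (N * A) k j := by
      simp only [Matrix.mul_apply, Finset.sum_mul]
      exact Finset.sum_comm
    rw [h1, hNA]
    simp [Matrix.neg_apply, Matrix.one_apply]


/-- Vector Lyapunov function / comparison system argument: if along a trajectory
`x` of the interconnected system the subsystem Lyapunov functions satisfy
`d/dt V_i ≤ ∑_j a_ij V_j` with `A` Metzler and Hurwitz, and each `V_i` is
quadratically sandwiched by the norm of its subsystem states (partitioned via
`part`), then the trajectory converges to `0` exponentially. -/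
theorem stmt_9 {n m : ℕ} (A : Matrix (Fin m) (Fin m) ℝ)
    (hMetzler : ∀ i j, i ≠ j → 0 ≤ A i j)
    (hHurwitz : ∀ lam : ℂ, lam ∈ spectrum ℂ (A.map (Complex.ofReal ·)) → lam.re < 0)
    (part : Fin n → Fin m)
    (V : Fin m → (Fin n → ℝ) → ℝ)
    (hVC1 : ∀ i, ContDiff ℝ 1 (V i))
    (α β : Fin m → ℝ) (hα : ∀ i, 0 < α i) (hβ : ∀ i, 0 < β i)
    (hsandwich : ∀ i, ∀ y : Fin n → ℝ,
      α i * (∑ j ∈ Finset.univ.filter (fun j => part j = i), (y j) ^ 2) ≤ V i y ∧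
      V i y ≤ β i * (∑ j ∈ Finset.univ.filter (fun j => part j = i), (y j) ^ 2))
    (x : ℝ → Fin n → ℝ) (d : ℝ → Fin m → ℝ)
    (hderiv : ∀ t, 0 ≤ t → ∀ i, HasDerivAt (fun s => V i (x s)) (d t i) t)
    (hcomp : ∀ t, 0 ≤ t → ∀ i, d t i ≤ ∑ j, A i j * V j (x t)) :
    ∃ c > 0, ∃ b > 0, ∀ t, 0 ≤ t → ‖x t‖ ≤ c * Real.exp (-b * t) * ‖x 0‖ := by
  rcases Nat.eq_zero_or_pos m with hm | hm
  · -- degenerate case : m = 0 forces n = 0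
    subst hm
    have hn : n = 0 := by
      by_contra h
      exact Fin.elim0 (part ⟨0, Nat.pos_of_ne_zero h⟩)
    subst hn
    refine ⟨1, one_pos, 1, one_pos, fun t ht => ?_⟩
    have hx : x t = 0 := funext fun j => Fin.elim0 j
    have hx0 : x 0 = 0 := funext fun j => Fin.elim0 j
    have hz : ‖(0 : Fin 0 → ℝ)‖ = 0 := norm_zero
    rw [hx, hx0, hz]
    positivity
  obtain ⟨q, hq, hqA⟩ := perron_vector hm A hMetzler hHurwitz
  have hVnn : ∀ i y, 0 ≤ V i y := fun i y =>
    le_trans (mul_nonneg (hα i).le (Finset.sum_nonneg fun j _ => sq_nonneg _))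
      (hsandwich i y).1
  set W : ℝ → ℝ := fun t => ∑ i, q i * V i (x t) with hW
  set Wd : ℝ → ℝ := fun t => ∑ i, q i * d t i with hWd
  have hWderiv : ∀ t, 0 ≤ t → HasDerivAt W (Wd t) t := fun t ht =>
    HasDerivAt.fun_sum fun i _ => (hderiv t ht i).const_mul (q i)
  have hWnn : ∀ t, 0 ≤ W t := fun t =>
    Finset.sum_nonneg fun i _ => mul_nonneg (hq i).le (hVnn i (x t))
  set ε : ℝ := (1 + ∑ i, q i)⁻¹ with hε
  have hqsum : 0 < 1 + ∑ i, q i := by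
    have : (0:ℝ) ≤ ∑ i, q i := Finset.sum_nonneg fun i _ => (hq i).le
    linarith
  have hεpos : 0 < ε := inv_pos.mpr hqsum
  have hεq : ∀ j, ε * q j ≤ 1 := by
    intro j
    have h1 : q j ≤ 1 + ∑ i, q i := by
      have := Finset.single_le_sum (fun i _ => (hq i).le) (Finset.mem_univ j)
      linarith
    calc ε * q j ≤ ε * (1 + ∑ i, q i) :=
          mul_le_mul_of_nonneg_left h1 hεpos.le
      _ = 1 := inv_mul_cancel₀ hqsum.ne'
  have key : ∀ t, 0 ≤ t → Wd t ≤ -ε * W t := by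
    intro t ht
    have h1 : Wd t ≤ ∑ i, q i * (∑ j, A i j * V j (x t)) :=
      Finset.sum_le_sum fun i _ =>
        mul_le_mul_of_nonneg_left (hcomp t ht i) (hq i).le
    have h2 : ∑ i, q i * (∑ j, A i j * V j (x t)) = -∑ j, V j (x t) := by
      simp_rw [Finset.mul_sum]
      rw [Finset.sum_comm]
      have h3 : ∀ j, ∑ i, q i * (A i j * V j (x t)) = -V j (x t) := by
        intro j
        have : ∑ i, q i * (A i j * V j (x t)) = (∑ i, q i * A i j) * V j (x t) := by
          rw [Finset.sum_mul]
          exact Finset.sum_congr rfl fun i _ => by ring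
        rw [this, hqA j]
        ring
      rw [Finset.sum_congr rfl fun j _ => h3 j, Finset.sum_neg_distrib]
    have h4 : ε * W t ≤ ∑ j, V j (x t) := by
      have : ∀ j : Fin m, ε * (q j * V j (x t)) ≤ V j (x t) := by
        intro j
        calc ε * (q j * V j (x t)) = (ε * q j) * V j (x t) := by ring
          _ ≤ 1 * V j (x t) := mul_le_mul_of_nonneg_right (hεq j) (hVnn j (x t))
          _ = V j (x t) := one_mul _
      calc ε * W t = ∑ j, ε * (q j * V j (x t)) := by rw [hW, Finset.mul_sum]
        _ ≤ ∑ j, V j (x t) := Finset.sum_le_sum fun j _ => this j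
    linarith
  -- Gronwall
  set g : ℝ → ℝ := fun t => W t * Real.exp (ε * t) with hg
  have hgderiv : ∀ t, 0 ≤ t →
      HasDerivAt g (Wd t * Real.exp (ε * t) + W t * (Real.exp (ε * t) * ε)) t := by
    intro t ht
    have h := (hWderiv t ht).fun_mul (((hasDerivAt_id t).const_mul ε).exp)
    simpa using h
  have hganti : AntitoneOn g (Set.Ici (0:ℝ)) := by
    refine antitoneOn_of_deriv_nonpos (convex_Ici 0) ?_ ?_ ?_
    · intro t ht
      exact (hgderiv t ht).continuousAt.continuousWithinAt
    · intro t ht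
      rw [interior_Ici] at ht
      exact (hgderiv t (le_of_lt ht)).differentiableAt.differentiableWithinAt
    · intro t ht
      rw [interior_Ici] at ht
      have ht' : 0 ≤ t := le_of_lt ht
      rw [(hgderiv t ht').deriv]
      have h1 := key t ht'
      have h2 : 0 < Real.exp (ε * t) := Real.exp_pos _
      nlinarith [hWnn t]
  have hWbound : ∀ t, 0 ≤ t → W t ≤ W 0 * Real.exp (-ε * t) := by
    intro t ht
    have h1 : g t ≤ g 0 := hganti Set.self_mem_Ici ht ht
    have h2 : g 0 = W 0 := by simp [hg]
    have h3 : W t * Real.exp (ε * t) ≤ W 0 := by rw [← h2]; exact h1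
    have h4 := mul_le_mul_of_nonneg_right h3 (Real.exp_nonneg (-ε * t))
    rwa [mul_assoc, ← Real.exp_add, show ε * t + -ε * t = 0 by ring, Real.exp_zero,
      mul_one] at h4
  -- coordinatewise bounds
  have hcoord : ∀ t, 0 ≤ t → ∀ j : Fin n,
      q (part j) * (α (part j) * (x t j) ^ 2) ≤ W t := by
    intro t ht j
    set i := part j with hi
    have h1 : (x t j) ^ 2 ≤ ∑ j' ∈ Finset.univ.filter (fun j' => part j' = i),
        (x t j') ^ 2 :=
      Finset.single_le_sum (f := fun j' => (x t j') ^ 2) (fun j' _ => sq_nonneg _)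
        (Finset.mem_filter.mpr ⟨Finset.mem_univ j, rfl⟩)
    have h2 : α i * (x t j) ^ 2 ≤ V i (x t) :=
      le_trans (mul_le_mul_of_nonneg_left h1 (hα i).le) (hsandwich i (x t)).1
    have h3 : q i * V i (x t) ≤ W t :=
      Finset.single_le_sum (fun i' _ => mul_nonneg (hq i').le (hVnn i' (x t)))
        (Finset.mem_univ i)
    calc q i * (α i * (x t j) ^ 2) ≤ q i * V i (x t) :=
          mul_le_mul_of_nonneg_left h2 (hq i).le
      _ ≤ W t := h3
  -- bound on W 0
  set K : ℝ := (∑ i, q i * β i) * n with hK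
  have hKnn : 0 ≤ K := by
    have : 0 ≤ ∑ i, q i * β i :=
      Finset.sum_nonneg fun i _ => mul_nonneg (hq i).le (hβ i).le
    positivity
  have hW0 : W 0 ≤ K * ‖x 0‖ ^ 2 := by
    have h1 : ∀ i, V i (x 0) ≤ β i * (n * ‖x 0‖ ^ 2) := by
      intro i
      refine le_trans (hsandwich i (x 0)).2 (mul_le_mul_of_nonneg_left ?_ (hβ i).le)
      have h2 : ∑ j ∈ Finset.univ.filter (fun j => part j = i), (x 0 j) ^ 2
          ≤ ∑ j : Fin n, (x 0 j) ^ 2 :=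
        Finset.sum_le_sum_of_subset_of_nonneg (Finset.filter_subset _ _)
          (fun j _ _ => sq_nonneg _)
      have h3 : ∑ j : Fin n, (x 0 j) ^ 2 ≤ ∑ _j : Fin n, ‖x 0‖ ^ 2 := by
        refine Finset.sum_le_sum fun j _ => ?_
        have h4 : ‖x 0 j‖ ≤ ‖x 0‖ := norm_le_pi_norm (x 0) j
        calc (x 0 j) ^ 2 = ‖x 0 j‖ ^ 2 := by rw [Real.norm_eq_abs, sq_abs]
          _ ≤ ‖x 0‖ ^ 2 := pow_le_pow_left₀ (norm_nonneg _) h4 2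
      have h5 : ∑ _j : Fin n, ‖x 0‖ ^ 2 = n * ‖x 0‖ ^ 2 := by
        rw [Finset.sum_const, Finset.card_univ, Fintype.card_fin, nsmul_eq_mul]
      linarith
    calc W 0 = ∑ i, q i * V i (x 0) := rfl
      _ ≤ ∑ i, q i * (β i * (n * ‖x 0‖ ^ 2)) :=
          Finset.sum_le_sum fun i _ => mul_le_mul_of_nonneg_left (h1 i) (hq i).le
      _ = K * ‖x 0‖ ^ 2 := by
          rw [hK, Finset.sum_mul, Finset.sum_mul]
          exact Finset.sum_congr rfl fun i _ => by push_cast; ring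
  -- the final constant
  set C : ℝ := 1 + ∑ i, K / (q i * α i) with hC
  have hC1 : 1 ≤ C := by
    have h0 : 0 ≤ ∑ i, K / (q i * α i) :=
      Finset.sum_nonneg fun i _ => div_nonneg hKnn (mul_nonneg (hq i).le (hα i).le)
    rw [hC]
    linarith
  have hCi : ∀ i, K / (q i * α i) ≤ C := by
    intro i
    have h1 : K / (q i * α i) ≤ ∑ i', K / (q i' * α i') :=
      Finset.single_le_sum
        (fun i' _ => div_nonneg hKnn (mul_nonneg (hq i').le (hα i').le))
        (Finset.mem_univ i)
    rw [hC]
    linarith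
  have hsq : ∀ t, 0 ≤ t → ∀ j : Fin n,
      (x t j) ^ 2 ≤ C * (Real.exp (-ε * t) * ‖x 0‖ ^ 2) := by
    intro t ht j
    set i := part j with hi
    have hqα : 0 < q i * α i := mul_pos (hq i) (hα i)
    have h1 : q i * α i * (x t j) ^ 2 ≤ K * ‖x 0‖ ^ 2 * Real.exp (-ε * t) := by
      have h2 := hcoord t ht j
      have h3 := hWbound t ht
      have h4 : W 0 * Real.exp (-ε * t) ≤ K * ‖x 0‖ ^ 2 * Real.exp (-ε * t) :=
        mul_le_mul_of_nonneg_right hW0 (Real.exp_nonneg _)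
      calc q i * α i * (x t j) ^ 2 = q i * (α i * (x t j) ^ 2) := by ring
        _ ≤ W t := h2
        _ ≤ W 0 * Real.exp (-ε * t) := h3
        _ ≤ K * ‖x 0‖ ^ 2 * Real.exp (-ε * t) := h4
    have h5 : (x t j) ^ 2 ≤ K * ‖x 0‖ ^ 2 * Real.exp (-ε * t) / (q i * α i) := by
      rw [le_div_iff₀ hqα]
      calc (x t j) ^ 2 * (q i * α i) = q i * α i * (x t j) ^ 2 := by ring
        _ ≤ _ := h1
    calc (x t j) ^ 2 ≤ K * ‖x 0‖ ^ 2 * Real.exp (-ε * t) / (q i * α i) := h5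
      _ = (K / (q i * α i)) * (Real.exp (-ε * t) * ‖x 0‖ ^ 2) := by ring
      _ ≤ C * (Real.exp (-ε * t) * ‖x 0‖ ^ 2) := by
          refine mul_le_mul_of_nonneg_right (hCi i) ?_
          positivity
  refine ⟨Real.sqrt C, Real.sqrt_pos.mpr (by linarith), ε / 2, by linarith, fun t ht => ?_⟩
  have hRHSnn : 0 ≤ Real.sqrt C * Real.exp (-(ε / 2) * t) * ‖x 0‖ := by positivity
  rw [pi_norm_le_iff_of_nonneg hRHSnn]
  intro j
  have h1 : ‖x t j‖ = Real.sqrt ((x t j) ^ 2) := by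
    rw [Real.sqrt_sq_eq_abs, Real.norm_eq_abs]
  rw [h1]
  have h2 : Real.sqrt ((x t j) ^ 2)
      ≤ Real.sqrt (C * (Real.exp (-ε * t) * ‖x 0‖ ^ 2)) :=
    Real.sqrt_le_sqrt (hsq t ht j)
  refine le_trans h2 (le_of_eq ?_)
  have hexp : Real.exp (-ε * t) = (Real.exp (-(ε / 2) * t)) ^ 2 := by
    rw [sq, ← Real.exp_add]
    congr 1
    ring
  rw [hexp, Real.sqrt_mul (by linarith : (0:ℝ) ≤ C), Real.sqrt_mul (by positivity),
    Real.sqrt_sq (Real.exp_nonneg _), Real.sqrt_sq (norm_nonneg _)]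
  ring
end

section
/- Suppose for each i there exist a_ij ∈ ℝ with a_ij ≥ 0 for j ≠ i, ∑_{j} a_ij < 0, and ∑_j a_ij γ_j ≤ 0 where all γ_j > 0. Then the matrix A = [a_ij] (with a_ij = 0 for non-neighbors) is Hurwitz and the box {v ∈ ℝ^m : 0 ≤ v_i ≤ γ_i} is invariant for v' = A v restricted to nonnegative solutions. -/
/-!
Every Gershgorin disc of a matrix with nonnegative off-diagonal entries lies in the half-plane
`Re z ≤ ∑ j, a_kj`, so negative row sums make `A` Hurwitz. For the invariance, enlarge the box to
`v ≤ γ + ε`. At a first time a trajectory touches the face `v_k = γ_k + ε` while staying in the box,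
nonnegativity of the off-diagonal entries gives `v_k' ≤ (A (γ + ε))_k = ∑ a_kj γ_j + ε ∑ a_kj < 0`,
whereas approaching the face from below forces `v_k' ≥ 0`.
-/

open Finset Filter Set Topology
open scoped Matrix

theorem Matrix.exists_re_le_sum_of_mem_spectrum_map {n : Type*} [Fintype n] [DecidableEq n]
    {A : Matrix n n ℝ} (hA : ∀ i j, i ≠ j → 0 ≤ A i j) {μ : ℂ}
    (hμ : μ ∈ spectrum ℂ (A.map (Complex.ofReal ·))) : ∃ k, μ.re ≤ ∑ j, A k j := by
  rw [← Matrix.spectrum_toLin', ← Module.End.hasEigenvalue_iff_mem_spectrum] at hμ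
  obtain ⟨k, hk⟩ := eigenvalue_mem_ball hμ
  refine ⟨k, ?_⟩
  have hoff : ∑ j ∈ univ.erase k, ‖A.map (Complex.ofReal ·) k j‖ = ∑ j ∈ univ.erase k, A k j :=
    sum_congr rfl fun j hj => by
      rw [Matrix.map_apply, Complex.norm_real,
        Real.norm_of_nonneg (hA k j (ne_of_mem_erase hj).symm)]
  rw [Metric.mem_closedBall, dist_eq_norm, hoff, Matrix.map_apply] at hk
  calc μ.re = A k k + (μ - A k k).re := by simp
    _ ≤ A k k + ‖μ - A k k‖ := by gcongr; exact Complex.re_le_norm _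
    _ ≤ A k k + ∑ j ∈ univ.erase k, A k j := by gcongr
    _ = ∑ j, A k j := add_sum_erase _ _ (mem_univ k)

theorem Matrix.mulVec_apply_le_of_le_of_apply_eq {n R : Type*} [Fintype n] [Semiring R]
    [PartialOrder R] [IsOrderedRing R] {A : Matrix n n R} (hA : ∀ i j, i ≠ j → 0 ≤ A i j)
    {w u : n → R} {k : n} (hle : w ≤ u) (hk : w k = u k) : (A *ᵥ w) k ≤ (A *ᵥ u) k := by
  refine sum_le_sum fun j _ => ?_
  rcases eq_or_ne k j with rfl | hkj
  · rw [hk]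
  · exact mul_le_mul_of_nonneg_left (hle j) (hA k j hkj)

theorem HasDerivAt.nonneg_of_eventually_le_left {g : ℝ → ℝ} {g' x : ℝ} (hg : HasDerivAt g g' x)
    (hle : ∀ᶠ s in 𝓝[<] x, g s ≤ g x) : 0 ≤ g' := by
  have hslope : Tendsto (slope g x) (𝓝[<] x) (𝓝 g') :=
    (hasDerivAt_iff_tendsto_slope.mp hg).mono_left (nhdsWithin_mono x fun s hs => ne_of_lt hs)
  refine ge_of_tendsto hslope ?_
  filter_upwards [hle, self_mem_nhdsWithin] with s hs hsx
  rw [slope_def_field]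
  exact div_nonneg_of_nonpos (sub_nonpos.mpr hs) (sub_nonpos.mpr (le_of_lt hsx))

theorem exists_first_hitting_time {ι : Type*} [Finite ι] {v : ℝ → ι → ℝ} {b : ι → ℝ}
    (hv : ∀ i, Continuous fun s => v s i) (h0 : ∀ i, v 0 i < b i) {t : ℝ} (ht : 0 ≤ t)
    (hhit : ∃ i, b i ≤ v t i) :
    ∃ τ ∈ Ioc 0 t, (∃ k, b k ≤ v τ k) ∧ ∀ s ∈ Ico 0 τ, ∀ j, v s j < b j := by
  set S := Icc 0 t ∩ ⋃ j, {s | b j ≤ v s j}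
  have hS : IsClosed S :=
    isClosed_Icc.inter (isClosed_iUnion_of_finite fun j => isClosed_le continuous_const (hv j))
  have hbdd : BddBelow S := ⟨0, fun s hs => hs.1.1⟩
  obtain ⟨⟨hτ0, hτt⟩, hτhit⟩ := hS.csInf_mem ⟨t, ⟨ht, le_rfl⟩, mem_iUnion.mpr hhit⟩ hbdd
  obtain ⟨k, hk⟩ := mem_iUnion.mp hτhit
  have hτpos : 0 < sInf S := hτ0.lt_of_ne fun h => (h0 k).not_ge (h ▸ hk)
  refine ⟨sInf S, ⟨hτpos, hτt⟩, ⟨k, hk⟩, fun s ⟨hs0, hsτ⟩ j => not_le.mp fun hj => ?_⟩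
  exact hsτ.not_ge (csInf_le hbdd ⟨⟨hs0, hsτ.le.trans hτt⟩, mem_iUnion.mpr ⟨j, hj⟩⟩)

theorem forall_lt_of_hasDerivAt_neg_at_boundary {ι : Type*} [Finite ι] {v v' : ℝ → ι → ℝ}
    {b : ι → ℝ} (hv : ∀ t i, HasDerivAt (fun s => v s i) (v' t i) t) (h0 : ∀ i, v 0 i < b i)
    (hbdry : ∀ t, 0 < t → ∀ k, v t ≤ b → v t k = b k → v' t k < 0) :
    ∀ t, 0 ≤ t → ∀ i, v t i < b i := by
  intro t ht i
  by_contra! hhit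
  have hcont : ∀ j, Continuous fun s => v s j := fun j =>
    continuous_iff_continuousAt.mpr fun s => (hv s j).continuousAt
  obtain ⟨τ, ⟨hτ0, -⟩, ⟨k, hk⟩, hbefore⟩ := exists_first_hitting_time hcont h0 ht ⟨i, hhit⟩
  have hleft : ∀ j, ∀ᶠ s in 𝓝[<] τ, v s j < b j := fun j => by
    filter_upwards [Ioo_mem_nhdsLT hτ0] with s hs
    exact hbefore s ⟨hs.1.le, hs.2⟩ j
  have hatτ : v τ ≤ b := fun j =>
    le_of_tendsto (((hcont j).tendsto τ).mono_left nhdsWithin_le_nhds)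
      ((hleft j).mono fun _ => le_of_lt)
  have hkτ : v τ k = b k := le_antisymm (hatτ k) hk
  refine (hbdry τ hτ0 k hatτ hkτ).not_ge ((hv τ k).nonneg_of_eventually_le_left ?_)
  exact (hleft k).mono fun _ hs => hkτ ▸ hs.le

theorem stmt_17_general {m : ℕ} (A : Matrix (Fin m) (Fin m) ℝ)
    (γ : Fin m → ℝ)
    (hMetzler : ∀ i j, i ≠ j → 0 ≤ A i j)
    (hrowneg : ∀ i, ∑ j, A i j < 0)
    (hrowγ : ∀ i, ∑ j, A i j * γ j ≤ 0) :
    (∀ lam : ℂ, lam ∈ spectrum ℂ (A.map (Complex.ofReal ·)) → lam.re < 0) ∧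
    (∀ v : ℝ → Fin m → ℝ,
      (∀ t, ∀ i, HasDerivAt (fun s => v s i) (A.mulVec (v t) i) t) →
      (∀ t, 0 ≤ t → ∀ i, 0 ≤ v t i) →
      (∀ i, v 0 i ≤ γ i) →
      ∀ t, 0 ≤ t → ∀ i, v t i ≤ γ i) := by
  refine ⟨fun lam hlam => ?_, fun v hv _ h0 t ht i => ?_⟩
  · obtain ⟨k, hk⟩ := Matrix.exists_re_le_sum_of_mem_spectrum_map hMetzler hlam
    exact hk.trans_lt (hrowneg k)
  refine le_of_forall_pos_lt_add fun ε hε => ?_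
  have hcorner : ∀ k, (A *ᵥ fun j => γ j + ε) k < 0 := fun k => by
    have hsplit : (A *ᵥ fun j => γ j + ε) k = ∑ j, A k j * γ j + ε * ∑ j, A k j := by
      simp only [Matrix.mulVec, dotProduct, mul_add, sum_add_distrib, sum_mul, mul_comm ε]
    rw [hsplit]
    nlinarith [hrowγ k, hrowneg k]
  refine forall_lt_of_hasDerivAt_neg_at_boundary (b := fun j => γ j + ε) hv
    (fun j => (h0 j).trans_lt (lt_add_of_pos_right _ hε)) (fun s _ k hle hk => ?_) t ht i
  exact (Matrix.mulVec_apply_le_of_le_of_apply_eq hMetzler hle hk).trans_lt (hcorner k)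

/-- The decentralized constraints `a_ij ≥ 0 (j ≠ i)`, `∑_j a_ij < 0`,
`∑_j a_ij γ_j ≤ 0` with `γ > 0` imply that `A` is Hurwitz and that the box
`{v : 0 ≤ v_i ≤ γ_i}` is invariant for nonnegative solutions of `v' = A v`. -/
theorem stmt_17 {m : ℕ} (A : Matrix (Fin m) (Fin m) ℝ)
    (γ : Fin m → ℝ) (hγ : ∀ i, 0 < γ i)
    (hMetzler : ∀ i j, i ≠ j → 0 ≤ A i j)
    (hrowneg : ∀ i, ∑ j, A i j < 0)
    (hrowγ : ∀ i, ∑ j, A i j * γ j ≤ 0) :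
    (∀ lam : ℂ, lam ∈ spectrum ℂ (A.map (Complex.ofReal ·)) → lam.re < 0) ∧
    (∀ v : ℝ → Fin m → ℝ,
      (∀ t, ∀ i, HasDerivAt (fun s => v s i) (A.mulVec (v t) i) t) →
      (∀ t, 0 ≤ t → ∀ i, 0 ≤ v t i) →
      (∀ i, v 0 i ≤ γ i) →
      ∀ t, 0 ≤ t → ∀ i, v t i ≤ γ i) :=
  stmt_17_general A γ hMetzler hrowneg hrowγ
end
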